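/- Let A be a C*-algebra and μ an irreducible *-representation of A on a finite-dimensional Hilbert space H. Then the kernel of μ is a maximal ideal of A, i.e. the singleton {[μ]} is a closed subset of the spectrum of A (in the hull-kernel topology on primitive ideals, ker μ is a closed point). -/

import Mathlib

/-!
Acting through `μ`, `H` is a simple `A`-module of finite dimension over `ℂ`, so by Schur's lemma
its commutant is `ℂ` and Jacobson density (Burnside's theorem) makes `a ↦ μ a` a surjection of
`A` onto the simple ring `End_ℂ H`. A ring map out of a simple ring into a nonzero ring is
injective, so once `ker μ ⊆ ker ν`, the map `ν` factors injectively through `End_ℂ H` and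
`ker ν = ker μ`.
-/

theorem IsSimpleModule.lsmul_surjective_of_isAlgClosed (k A V : Type*) [Field k] [IsAlgClosed k]
    [Ring A] [Algebra k A] [AddCommGroup V] [Module k V] [Module A V] [IsScalarTower k A V]
    [IsSimpleModule A V] [FiniteDimensional k V] :
    Function.Surjective (Algebra.lsmul k k V : A →ₐ[k] Module.End k V) := by
  intro f
  have : Module.Finite (Module.End A V) V := .of_restrictScalars_finite k _ V
  -- Schur: every `A`-endomorphism is a scalar, so `f` commutes with all of them.
  let F : Module.End (Module.End A V) V :=
    { toFun := f
      map_add' := f.map_add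
      map_smul' := fun φ v => by
        obtain ⟨c, rfl⟩ := (IsSimpleModule.algebraMap_end_bijective_of_isAlgClosed k).2 φ
        simp }
  obtain ⟨a, ha⟩ := Module.Finite.toModuleEnd_moduleEnd_surjective F
  exact ⟨a, LinearMap.ext fun v => LinearMap.congr_fun ha v⟩

instance Module.End.isSimpleRing (k V : Type*) [Field k] [AddCommGroup V] [Module k V]
    [FiniteDimensional k V] [Nontrivial V] : IsSimpleRing (Module.End k V) :=
  have : Nonempty (Fin (Module.finrank k V)) := ⟨⟨0, Module.finrank_pos⟩⟩
  .of_ringEquiv (LinearMap.toMatrixAlgEquiv (Module.finBasis k V)).symm.toRingEquiv inferInstance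

theorem RingHom.ker_eq_of_surjective_of_ker_le {R S T : Type*} [Ring R] [Ring S] [IsSimpleRing S]
    [Ring T] [Nontrivial T] {f : R →+* S} (hf : Function.Surjective f) {g : R →+* T}
    (h : RingHom.ker f ≤ RingHom.ker g) : RingHom.ker g = RingHom.ker f := by
  let φ : S →+* T := f.liftOfRightInverse _ (Function.rightInverse_surjInv hf) ⟨g, h⟩
  have hφ : φ.comp f = g := f.liftOfRightInverse_comp _ _ ⟨g, h⟩
  refine le_antisymm (fun a ha => ?_) h
  rw [RingHom.mem_ker, ← hφ, RingHom.comp_apply, ← map_zero φ] at ha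
  exact φ.injective ha

theorem stmt_0_general
    {A : Type*} [NormedRing A] [StarRing A] [NormedAlgebra ℂ A]
    {H : Type*} [NormedAddCommGroup H] [InnerProductSpace ℂ H]
    [FiniteDimensional ℂ H] [Nontrivial H]
    (μ : A →⋆ₐ[ℂ] (H →L[ℂ] H))
    (hμirr : ∀ S : Submodule ℂ H, IsClosed (S : Set H) →
      (∀ a : A, ∀ x ∈ S, μ a x ∈ S) → S = ⊥ ∨ S = ⊤) :
    ∀ (K : Type) (_ : NormedAddCommGroup K), ∀ (_ : InnerProductSpace ℂ K)
      (_ : CompleteSpace K), Nontrivial K →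
      ∀ ν : A →⋆ₐ[ℂ] (K →L[ℂ] K),
        (∀ S : Submodule ℂ K, IsClosed (S : Set K) →
          (∀ a : A, ∀ x ∈ S, ν a x ∈ S) → S = ⊥ ∨ S = ⊤) →
        (∀ a : A, μ a = 0 → ν a = 0) →
        (∀ a : A, ν a = 0 → μ a = 0) := by
  intro K _ _ _ _ ν _ hker a hνa
  let _ : Module A H := Module.compHom H μ.toRingHom
  have : IsScalarTower ℂ A H := ⟨fun c a x => by
    show μ (c • a) x = c • μ a x
    rw [map_smul]; rfl⟩
  have : IsSimpleModule A H := by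
    refine { eq_bot_or_eq_top := fun p => ?_ }
    simpa only [Submodule.restrictScalars_eq_bot_iff, Submodule.restrictScalars_eq_top_iff] using
      hμirr (p.restrictScalars ℂ) (Submodule.closed_of_finiteDimensional _)
        fun a x hx => p.smul_mem a hx
  let ρ : A →+* Module.End ℂ H := (Algebra.lsmul ℂ ℂ H : A →ₐ[ℂ] _)
  have hρ : ∀ b, ρ b = 0 ↔ μ b = 0 := fun b => by
    rw [← ContinuousLinearMap.coe_inj]; rfl
  have hker_eq := RingHom.ker_eq_of_surjective_of_ker_le (g := (ν : A →+* (K →L[ℂ] K)))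
    (IsSimpleModule.lsmul_surjective_of_isAlgClosed ℂ A H) fun b hb => hker b ((hρ b).1 hb)
  exact (hρ a).1 (hker_eq.le hνa)

/-- If `μ` is an irreducible *-representation of a C*-algebra `A` on a
finite-dimensional Hilbert space `H`, then `ker μ` is a closed point of the spectrum:
no irreducible representation has kernel strictly containing `ker μ`. -/
theorem stmt_0
    {A : Type*} [NormedRing A] [StarRing A] [CStarRing A] [NormedAlgebra ℂ A]
    [StarModule ℂ A] [CompleteSpace A]
    {H : Type*} [NormedAddCommGroup H] [InnerProductSpace ℂ H] [CompleteSpace H]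
    [FiniteDimensional ℂ H] [Nontrivial H]
    (μ : A →⋆ₐ[ℂ] (H →L[ℂ] H))
    (hμirr : ∀ S : Submodule ℂ H, IsClosed (S : Set H) →
      (∀ a : A, ∀ x ∈ S, μ a x ∈ S) → S = ⊥ ∨ S = ⊤) :
    ∀ (K : Type) (_ : NormedAddCommGroup K), ∀ (_ : InnerProductSpace ℂ K)
      (_ : CompleteSpace K), Nontrivial K →
      ∀ ν : A →⋆ₐ[ℂ] (K →L[ℂ] K),
        (∀ S : Submodule ℂ K, IsClosed (S : Set K) →
          (∀ a : A, ∀ x ∈ S, ν a x ∈ S) → S = ⊥ ∨ S = ⊤) →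
        (∀ a : A, μ a = 0 → ν a = 0) →
        (∀ a : A, ν a = 0 → μ a = 0) :=
  stmt_0_general μ hμirr
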